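/- For any two distinct strings x, y over Σ and any letter λ ∈ Σ: x ≺ y in V-order if and only if xλ ≺ yλ (where xλ denotes x with the letter λ appended at the right end). -/

import Mathlib

variable {α : Type*} [LinearOrder α]

/-- The star operation on strings: delete the letter `x_h`, where `h` is the
start of the longest non-decreasing suffix (so `h = 1` iff the whole string is
non-decreasing, and otherwise `x_{h-1} > x_h ≤ x_{h+1} ≤ ⋯ ≤ x_n`). -/
def vstar : List α → List α
  | [] => []
  | a :: t => if List.IsChain (· ≤ ·) (a :: t) then t else a :: vstar t

/-- V-order `≺` between distinct strings `x`, `y`: either `x` lies on the path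
`y, y*, y^{2*}, …, ε`, or (if neither lies on the path of the other) taking the
least `s, t` with `x^{(s+1)*} = y^{(t+1)*}` and the greatest position `j` at
which `s = x^{s*}` and `t = y^{t*}` differ, the letter of `x^{s*}` at `j` is
smaller than that of `y^{t*}`. -/
def VLess (x y : List α) : Prop :=
  (∃ k : ℕ, 0 < k ∧ vstar^[k] y = x) ∨
  ((¬ ∃ k : ℕ, vstar^[k] y = x) ∧ (¬ ∃ k : ℕ, vstar^[k] x = y) ∧
    ∃ s t : ℕ,
      vstar^[s + 1] x = vstar^[t + 1] y ∧
      (∀ s' t' : ℕ, vstar^[s' + 1] x = vstar^[t' + 1] y → s ≤ s' ∧ t ≤ t') ∧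
      ∃ j : ℕ, j < (vstar^[s] x).length ∧
        (∀ j' : ℕ, j < j' → (vstar^[s] x)[j']? = (vstar^[t] y)[j']?) ∧
        ∃ a b : α, (vstar^[s] x)[j]? = some a ∧ (vstar^[t] y)[j]? = some b ∧
          a < b)

/-!
Write `x_k` for `vstar^[k] x`. Along the star path `x_0, x_1, …` the last letter never
decreases, and `(z c)* = z` when `z` is empty or ends with a letter above `c`, while
`(z c)* = z* c` otherwise. Hence the star path of `x c` is `x_0 c, …, x_K c, x_K, x_{K+1}, …`,
where `K` is the first stage at which `x_K` is empty or ends above `c`. Matching the star paths of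
`x c` and `y c` with those of `x` and `y` in this way shows that `x ≺ y` implies `x c ≺ y c` in
every case of the definition; the converse follows since `≺` is total and asymmetric on distinct
strings.
-/

def EndsAbove (c : α) (z : List α) : Prop := ∀ a ∈ z.getLast?, c < a

@[simp] lemma endsAbove_nil (c : α) : EndsAbove c ([] : List α) := by simp [EndsAbove]

@[simp] lemma endsAbove_append_singleton (c a : α) (z : List α) :
    EndsAbove c (z ++ [a]) ↔ c < a := by simp [EndsAbove]

open Classical in
lemma vstar_append_singleton (z : List α) (c : α) :
    vstar (z ++ [c]) = if EndsAbove c z then z else vstar z ++ [c] := by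
  induction z with
  | nil => simp [vstar]
  | cons d t ih =>
    rcases t.eq_nil_or_concat' with rfl | ⟨t, e, rfl⟩
    · have := endsAbove_append_singleton c d []
      by_cases h : d ≤ c <;> simp_all [vstar]
    · have hchain : List.IsChain (· ≤ ·) ((d :: t) ++ [e] ++ [c]) ↔
          List.IsChain (· ≤ ·) ((d :: t) ++ [e]) ∧ e ≤ c := by
        rw [List.isChain_append, List.getLast?_concat]
        simp
      rw [endsAbove_append_singleton] at ih
      rw [← List.cons_append, endsAbove_append_singleton, List.cons_append, List.cons_append,
        vstar, ← List.cons_append, ← List.cons_append, ih]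
      by_cases hce : c < e
      · simp [hce, not_le.mpr hce]
      · simp only [hchain, not_lt.mp hce, and_true, if_neg hce]
        rw [List.cons_append, vstar]
        split_ifs <;> rfl

lemma length_vstar (z : List α) : (vstar z).length = z.length - 1 := by
  induction z with
  | nil => rfl
  | cons a t ih =>
    rw [vstar]
    split_ifs with hchain
    · simp
    · rcases t with _ | ⟨b, t⟩
      · simp at hchain
      · simp [ih]

lemma length_iterate_vstar (k : ℕ) (z : List α) : (vstar^[k] z).length = z.length - k := by
  induction k with
  | zero => simp
  | succ k ih => rw [Function.iterate_succ_apply', length_vstar, ih]; omega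

lemma iterate_vstar_nil (k : ℕ) : vstar^[k] ([] : List α) = [] :=
  Function.iterate_fixed rfl k

lemma iterate_vstar_eq_nil {k : ℕ} {z : List α} (h : z.length ≤ k) : vstar^[k] z = [] :=
  List.length_eq_zero_iff.mp (by rw [length_iterate_vstar]; omega)

lemma endsAbove_vstar {c : α} {z : List α} (h : EndsAbove c z) : EndsAbove c (vstar z) := by
  rcases z.eq_nil_or_concat' with rfl | ⟨w, d, rfl⟩
  · exact h
  · rw [endsAbove_append_singleton] at h
    rw [vstar_append_singleton]
    split_ifs with hw
    · exact fun a ha => h.trans (hw a ha)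
    · simpa using h

lemma endsAbove_iterate_vstar {c : α} {z : List α} (h : EndsAbove c z) (k : ℕ) :
    EndsAbove c (vstar^[k] z) := by
  induction k with
  | zero => exact h
  | succ k ih => rw [Function.iterate_succ_apply']; exact endsAbove_vstar ih

lemma exists_endsAbove_iterate_vstar (c : α) (x : List α) : ∃ k, EndsAbove c (vstar^[k] x) :=
  ⟨x.length, by rw [iterate_vstar_eq_nil le_rfl]; exact endsAbove_nil c⟩

open Classical in
/-- The appended letter `c` survives exactly `deletionStage c x` applications of `*` to `x ++ [c]`
and is deleted by the next one. -/
noncomputable def deletionStage (c : α) (x : List α) : ℕ :=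
  Nat.find (exists_endsAbove_iterate_vstar c x)

lemma endsAbove_iterate_vstar_iff {c : α} {x : List α} {k : ℕ} :
    EndsAbove c (vstar^[k] x) ↔ deletionStage c x ≤ k := by
  classical
  refine ⟨fun h => Nat.find_min' _ h, fun h => ?_⟩
  obtain ⟨m, rfl⟩ := Nat.exists_eq_add_of_le h
  rw [add_comm, Function.iterate_add_apply]
  exact endsAbove_iterate_vstar (Nat.find_spec (exists_endsAbove_iterate_vstar c x)) m

lemma iterate_vstar_append_singleton_of_le {c : α} {x : List α} {k : ℕ}
    (hk : k ≤ deletionStage c x) : vstar^[k] (x ++ [c]) = vstar^[k] x ++ [c] := by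
  induction k with
  | zero => rfl
  | succ k ih =>
    have hk' : ¬ EndsAbove c (vstar^[k] x) := by rw [endsAbove_iterate_vstar_iff]; omega
    rw [Function.iterate_succ_apply', Function.iterate_succ_apply', ih (by omega),
      vstar_append_singleton, if_neg hk']

lemma iterate_succ_vstar_append_singleton_of_ge {c : α} {x : List α} {k : ℕ}
    (hk : deletionStage c x ≤ k) : vstar^[k + 1] (x ++ [c]) = vstar^[k] x := by
  obtain ⟨m, rfl⟩ := Nat.exists_eq_add_of_le hk
  have hK : EndsAbove c (vstar^[deletionStage c x] x) := endsAbove_iterate_vstar_iff.mpr le_rfl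
  rw [show deletionStage c x + m + 1 = m + (deletionStage c x + 1) by omega,
    Function.iterate_add_apply, Function.iterate_succ_apply',
    iterate_vstar_append_singleton_of_le le_rfl, vstar_append_singleton, if_pos hK,
    add_comm, Function.iterate_add_apply]

/-- The comparison in `VLess`; on strings of equal length it is the lexicographic order of the
reversed strings. -/
def LtAtLastDiff (u v : List α) : Prop :=
  ∃ j : ℕ, j < u.length ∧ (∀ j' : ℕ, j < j' → u[j']? = v[j']?) ∧
    ∃ a b : α, u[j]? = some a ∧ v[j]? = some b ∧ a < b

namespace LtAtLastDiff

variable {u v : List α}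

lemma length_eq (h : LtAtLastDiff u v) : u.length = v.length := by
  obtain ⟨j, hj, hbeyond, a, b, -, hb, -⟩ := h
  have hjv : j < v.length := (List.getElem?_eq_some_iff.mp hb).1
  have key : ∀ j', j < j' → (u.length ≤ j' ↔ v.length ≤ j') := fun j' hj' => by
    rw [← List.getElem?_eq_none_iff, ← List.getElem?_eq_none_iff, hbeyond j' hj']
  have hu := key u.length
  have hv := key v.length
  omega

lemma not_nil_left : ¬ LtAtLastDiff [] v := by
  rintro ⟨j, hj, -⟩
  exact Nat.not_lt_zero j hj

lemma append_singleton_iff (hlen : u.length = v.length) {a b : α} :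
    LtAtLastDiff (u ++ [a]) (v ++ [b]) ↔ a < b ∨ a = b ∧ LtAtLastDiff u v := by
  have hbeyond : ∀ j', u.length < j' → (u ++ [a])[j']? = (v ++ [b])[j']? := fun j' hj' => by
    rw [List.getElem?_eq_none (by simp; omega), List.getElem?_eq_none (by simp; omega)]
  constructor
  · rintro ⟨j, hj, hagree, a', b', ha', hb', hlt⟩
    rcases (Nat.lt_succ_iff.mp (by simpa using hj)).lt_or_eq with hj | rfl
    · have hab : a = b := by
        simpa [List.getElem?_append_right, hlen] using hagree u.length hj
      refine Or.inr ⟨hab, j, hj, fun j' hj' => ?_, a', b', ?_, ?_, hlt⟩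
      · rcases lt_or_ge j' u.length with h | h
        · simpa [List.getElem?_append_left h, List.getElem?_append_left (hlen ▸ h)] using
            hagree j' hj'
        · rw [List.getElem?_eq_none h, List.getElem?_eq_none (hlen ▸ h)]
      · simpa [List.getElem?_append_left hj] using ha'
      · simpa [List.getElem?_append_left (hlen ▸ hj)] using hb'
    · simp [hlen] at ha' hb'
      exact Or.inl (ha' ▸ hb' ▸ hlt)
  · rintro (hab | ⟨rfl, j, hj, hagree, a', b', ha', hb', hlt⟩)
    · exact ⟨u.length, by simp, hbeyond, a, b, by simp, by simp [hlen], hab⟩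
    · refine ⟨j, by simp; omega, fun j' hj' => ?_, a', b', ?_, ?_, hlt⟩
      · rcases lt_trichotomy j' u.length with h | rfl | h
        · rw [List.getElem?_append_left h, List.getElem?_append_left (hlen ▸ h)]
          exact hagree j' hj'
        · simp [hlen]
        · exact hbeyond j' h
      · simpa [List.getElem?_append_left hj] using ha'
      · simpa [List.getElem?_append_left (hlen ▸ hj)] using hb'

lemma asymm (h : LtAtLastDiff u v) : ¬ LtAtLastDiff v u := by
  induction u using List.reverseRecOn generalizing v with
  | nil => exact absurd h not_nil_left
  | append_singleton u a ih =>
    rcases v.eq_nil_or_concat' with rfl | ⟨v, b, rfl⟩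
    · simpa using h.length_eq
    · have hlen : u.length = v.length := by simpa using h.length_eq
      rw [append_singleton_iff hlen] at h
      rw [append_singleton_iff hlen.symm]
      rintro (hba | ⟨rfl, hvu⟩)
      · rcases h with hab | ⟨rfl, -⟩
        · exact lt_asymm hab hba
        · exact lt_irrefl _ hba
      · rcases h with hab | ⟨-, huv⟩
        · exact lt_irrefl _ hab
        · exact ih huv hvu

lemma ne (h : LtAtLastDiff u v) : u ≠ v := by
  rintro rfl
  exact h.asymm h

lemma ne_nil (h : LtAtLastDiff u v) : u ≠ [] := by
  rintro rfl
  exact not_nil_left h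

lemma total (hlen : u.length = v.length) (hne : u ≠ v) :
    LtAtLastDiff u v ∨ LtAtLastDiff v u := by
  induction u using List.reverseRecOn generalizing v with
  | nil => exact absurd (List.length_eq_zero_iff.mp hlen.symm).symm hne
  | append_singleton u a ih =>
    rcases v.eq_nil_or_concat' with rfl | ⟨v, b, rfl⟩
    · simp at hlen
    · have hlen' : u.length = v.length := by simpa using hlen
      rw [append_singleton_iff hlen', append_singleton_iff hlen'.symm]
      rcases lt_trichotomy a b with hab | rfl | hba
      · exact Or.inl (Or.inl hab)
      · have huv : u ≠ v := fun h => hne (by rw [h])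
        exact (ih hlen' huv).imp (fun h => Or.inr ⟨rfl, h⟩) (fun h => Or.inr ⟨rfl, h⟩)
      · exact Or.inr (Or.inl hba)

lemma endsAbove {c : α} (h : LtAtLastDiff u v) (hu : EndsAbove c u) : EndsAbove c v := by
  rcases u.eq_nil_or_concat' with rfl | ⟨u, a, rfl⟩
  · exact absurd h not_nil_left
  rcases v.eq_nil_or_concat' with rfl | ⟨v, b, rfl⟩
  · exact endsAbove_nil c
  have hlen : u.length = v.length := by simpa using h.length_eq
  rw [endsAbove_append_singleton] at hu ⊢
  rcases (append_singleton_iff hlen).mp h with hab | ⟨rfl, -⟩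
  · exact hu.trans hab
  · exact hu

end LtAtLastDiff

lemma ltAtLastDiff_append_singleton_of_endsAbove {u v : List α} {c : α}
    (hlen : u.length + 1 = v.length) (hv : EndsAbove c v) : LtAtLastDiff (u ++ [c]) v := by
  rcases v.eq_nil_or_concat' with rfl | ⟨v, b, rfl⟩
  · simp at hlen
  · simp only [List.length_append, List.length_singleton, Nat.add_right_cancel_iff] at hlen
    rw [LtAtLastDiff.append_singleton_iff hlen]
    exact Or.inl ((endsAbove_append_singleton c b v).mp hv)

def OnStarPath (x y : List α) : Prop := ∃ k : ℕ, vstar^[k] y = x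

lemma onStarPath_iff {x y : List α} :
    OnStarPath x y ↔ x.length ≤ y.length ∧ vstar^[y.length - x.length] y = x := by
  refine ⟨fun ⟨k, hk⟩ => ?_, fun h => ⟨_, h.2⟩⟩
  have hlen : x.length = y.length - k := by rw [← hk, length_iterate_vstar]
  rcases le_or_gt k y.length with h | h
  · exact ⟨by omega, by rwa [show y.length - x.length = k by omega]⟩
  · obtain rfl : x = [] := by rw [← hk]; exact iterate_vstar_eq_nil h.le
    exact ⟨by simp, iterate_vstar_eq_nil (by simp)⟩

lemma not_onStarPath_of_length_lt {x y : List α} (h : y.length < x.length) :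
    ¬ OnStarPath x y :=
  fun hxy => absurd (onStarPath_iff.mp hxy).1 (not_le.mpr h)

lemma not_onStarPath_append_singleton {x y : List α} (h : ¬ OnStarPath x y) (c : α) :
    ¬ OnStarPath (x ++ [c]) (y ++ [c]) := by
  rintro ⟨k, hk⟩
  rcases le_or_gt k (deletionStage c y) with hle | hlt
  · rw [iterate_vstar_append_singleton_of_le hle] at hk
    exact h ⟨k, List.append_cancel_right hk⟩
  · obtain ⟨k, rfl⟩ := Nat.exists_eq_add_of_lt hlt
    rw [iterate_succ_vstar_append_singleton_of_ge (by omega)] at hk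
    have hc : EndsAbove c (vstar^[deletionStage c y + k] y) :=
      endsAbove_iterate_vstar_iff.mpr (by omega)
    rw [hk, endsAbove_append_singleton] at hc
    exact lt_irrefl c hc

lemma le_and_le_of_iterate_succ_vstar_eq {x y : List α} {s t s' t' : ℕ}
    (hne : vstar^[s] x ≠ vstar^[t] y)
    (hlen : (vstar^[s] x).length = (vstar^[t] y).length)
    (heq' : vstar^[s' + 1] x = vstar^[t' + 1] y) : s ≤ s' ∧ t ≤ t' := by
  have hpos' : 0 < (vstar^[s] x).length := by
    refine Nat.pos_of_ne_zero fun h0 => hne ?_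
    rw [List.length_eq_zero_iff.mp h0, eq_comm, ← List.length_eq_zero_iff, ← hlen, h0]
  have hlen' := congrArg List.length heq'
  simp only [length_iterate_vstar] at hlen hpos' hlen'
  -- Equal lengths give `s' < s ↔ t' < t`; then applying stars to `heq'` yields `x_s = y_t`.
  by_contra hlt
  obtain ⟨d, hs⟩ : ∃ d, s = s' + 1 + d := ⟨s - s' - 1, by omega⟩
  obtain ht : t = t' + 1 + d := by omega
  apply hne
  rw [hs, ht, add_comm _ d, Function.iterate_add_apply, heq', ← Function.iterate_add_apply,
    add_comm d]

lemma vless_of_ltAtLastDiff {x y : List α} {s t : ℕ} (hxy : ¬ OnStarPath x y)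
    (hyx : ¬ OnStarPath y x) (heq : vstar^[s + 1] x = vstar^[t + 1] y)
    (hlt : LtAtLastDiff (vstar^[s] x) (vstar^[t] y)) : VLess x y :=
  Or.inr ⟨hxy, hyx, s, t, heq,
    fun _ _ => le_and_le_of_iterate_succ_vstar_eq hlt.ne hlt.length_eq, hlt⟩

lemma length_iterate_vstar_lt {k : ℕ} {z : List α} (hk : 0 < k) (hz : z ≠ []) :
    (vstar^[k] z).length < z.length := by
  rw [length_iterate_vstar]
  have := List.length_pos_iff.mpr hz
  omega

lemma vless_asymm {x y : List α} (hne : x ≠ y) (h : VLess x y) : ¬ VLess y x := by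
  rintro (⟨k', hk', hy⟩ | ⟨-, hyx, s', t', heq', hmin', hlt'⟩)
  · rcases h with ⟨k, hk, hx⟩ | ⟨-, hyx, -⟩
    · have hx0 : x ≠ [] := by rintro rfl; exact hne (by rw [← hy, iterate_vstar_nil])
      have hy0 : y ≠ [] := by rintro rfl; exact hne (by rw [← hx, iterate_vstar_nil])
      have h1 := length_iterate_vstar_lt hk hy0
      have h2 := length_iterate_vstar_lt hk' hx0
      rw [hx] at h1
      rw [hy] at h2
      omega
    · exact hyx ⟨k', hy⟩
  · rcases h with ⟨k, -, hk⟩ | ⟨-, -, s, t, heq, hmin, hlt⟩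
    · exact hyx ⟨k, hk⟩
    · obtain ⟨hs, ht⟩ := hmin t' s' heq'.symm
      obtain ⟨hs', ht'⟩ := hmin' t s heq.symm
      obtain rfl : s = t' := by omega
      obtain rfl : t = s' := by omega
      exact LtAtLastDiff.asymm hlt hlt'

lemma exists_ltAtLastDiff_divergence {x y : List α} (hxy : ¬ OnStarPath x y)
    (hyx : ¬ OnStarPath y x) :
    ∃ s t, vstar^[s + 1] x = vstar^[t + 1] y ∧
      (LtAtLastDiff (vstar^[s] x) (vstar^[t] y) ∨ LtAtLastDiff (vstar^[t] y) (vstar^[s] x)) := by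
  classical
  -- `P ℓ`: the strings of length `ℓ` on the two star paths coincide.
  let P : ℕ → Prop := fun ℓ => vstar^[x.length - ℓ] x = vstar^[y.length - ℓ] y
  have hP0 : P 0 := by simp only [P, Nat.sub_zero, iterate_vstar_eq_nil le_rfl]
  set ℓ := Nat.findGreatest P (min x.length y.length)
  have hPℓ : P ℓ := Nat.findGreatest_spec (Nat.zero_le _) hP0
  have hℓlt : ℓ < min x.length y.length := by
    refine lt_of_le_of_ne (Nat.findGreatest_le _) fun h => ?_
    rcases le_total x.length y.length with hle | hle
    · exact hxy ⟨y.length - ℓ, by rw [← hPℓ, h, min_eq_left hle, Nat.sub_self]; rfl⟩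
    · exact hyx ⟨x.length - ℓ, by rw [hPℓ, h, min_eq_right hle, Nat.sub_self]; rfl⟩
  have hne : ¬ P (ℓ + 1) := Nat.findGreatest_is_greatest (Nat.lt_succ_self ℓ) (by omega)
  refine ⟨x.length - (ℓ + 1), y.length - (ℓ + 1), ?_, LtAtLastDiff.total ?_ hne⟩
  · rwa [show x.length - (ℓ + 1) + 1 = x.length - ℓ by omega,
      show y.length - (ℓ + 1) + 1 = y.length - ℓ by omega]
  · simp only [length_iterate_vstar]
    omega

lemma vless_total {x y : List α} (hne : x ≠ y) : VLess x y ∨ VLess y x := by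
  by_cases hxy : OnStarPath x y
  · obtain ⟨k, hk⟩ := hxy
    exact Or.inl (Or.inl ⟨k, Nat.pos_of_ne_zero (by rintro rfl; exact hne hk.symm), hk⟩)
  by_cases hyx : OnStarPath y x
  · obtain ⟨k, hk⟩ := hyx
    exact Or.inr (Or.inl ⟨k, Nat.pos_of_ne_zero (by rintro rfl; exact hne hk), hk⟩)
  obtain ⟨s, t, heq, hlt | hlt⟩ := exists_ltAtLastDiff_divergence hxy hyx
  · exact Or.inl (vless_of_ltAtLastDiff hxy hyx heq hlt)
  · exact Or.inr (vless_of_ltAtLastDiff hyx hxy heq.symm hlt)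

lemma vless_append_singleton_of_onStarPath {x y : List α} (hne : x ≠ y) (h : OnStarPath x y)
    (c : α) : VLess (x ++ [c]) (y ++ [c]) := by
  obtain ⟨hle, hd⟩ := onStarPath_iff.mp h
  set d := y.length - x.length with hd_def
  have hd0 : 0 < d := Nat.pos_of_ne_zero fun h0 => hne (by rw [← hd, h0]; rfl)
  rcases le_or_gt d (deletionStage c y) with hdy | hdy
  · exact Or.inl ⟨d, hd0, by rw [iterate_vstar_append_singleton_of_le hdy, hd]⟩
  have hYd : vstar^[d] (y ++ [c]) = vstar^[d - 1] y := by
    have := iterate_succ_vstar_append_singleton_of_ge (c := c) (x := y) (k := d - 1) (by omega)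
    rwa [Nat.sub_add_cancel hd0] at this
  by_cases hP : vstar^[d - 1] y = x ++ [c]
  · exact Or.inl ⟨d, hd0, hYd.trans hP⟩
  have hx : EndsAbove c x := hd ▸ endsAbove_iterate_vstar_iff.mpr hdy.le
  refine vless_of_ltAtLastDiff (s := 0) (t := d) (fun hon => hP ?_) ?_ ?_ ?_
  · have h' := (onStarPath_iff.mp hon).2
    simp only [List.length_append, List.length_singleton, Nat.add_sub_add_right] at h'
    rwa [← hd_def, hYd] at h'
  · exact not_onStarPath_of_length_lt (by simp; omega)
  · rw [iterate_succ_vstar_append_singleton_of_ge ((endsAbove_iterate_vstar_iff (k := 0)).mp hx),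
      iterate_succ_vstar_append_singleton_of_ge hdy.le, hd]
    rfl
  · rw [hYd]
    refine ltAtLastDiff_append_singleton_of_endsAbove ?_
      (endsAbove_iterate_vstar_iff.mpr (by omega))
    rw [length_iterate_vstar]
    omega

lemma vless_append_singleton_of_ltAtLastDiff {x y : List α} {s t : ℕ}
    (hxy : ¬ OnStarPath x y) (hyx : ¬ OnStarPath y x) (heq : vstar^[s + 1] x = vstar^[t + 1] y)
    (hlt : LtAtLastDiff (vstar^[s] x) (vstar^[t] y)) (c : α) :
    VLess (x ++ [c]) (y ++ [c]) := by
  have hxy' := not_onStarPath_append_singleton hxy c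
  have hyx' := not_onStarPath_append_singleton hyx c
  rcases le_or_gt (deletionStage c x) s with hx | hx <;>
    rcases le_or_gt (deletionStage c y) t with hy | hy
  · refine vless_of_ltAtLastDiff hxy' hyx' (s := s + 1) (t := t + 1) ?_ ?_
    · rwa [iterate_succ_vstar_append_singleton_of_ge (by omega),
        iterate_succ_vstar_append_singleton_of_ge (by omega)]
    · rwa [iterate_succ_vstar_append_singleton_of_ge hx,
        iterate_succ_vstar_append_singleton_of_ge hy]
  · have := hlt.endsAbove (endsAbove_iterate_vstar_iff.mpr hx)
    rw [endsAbove_iterate_vstar_iff] at this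
    omega
  · have hx' : deletionStage c x ≤ s + 1 := by
      rw [← endsAbove_iterate_vstar_iff, heq, endsAbove_iterate_vstar_iff]
      omega
    refine vless_of_ltAtLastDiff hxy' hyx' (s := s + 1) (t := t + 1) ?_ ?_
    · rwa [iterate_succ_vstar_append_singleton_of_ge hx',
        iterate_succ_vstar_append_singleton_of_ge (by omega)]
    · rw [iterate_vstar_append_singleton_of_le hx, iterate_succ_vstar_append_singleton_of_ge hy]
      refine ltAtLastDiff_append_singleton_of_endsAbove ?_ (endsAbove_iterate_vstar_iff.mpr hy)
      have hlen := hlt.length_eq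
      have hpos := List.length_pos_iff.mpr hlt.ne_nil
      simp only [length_iterate_vstar] at hlen hpos ⊢
      omega
  · refine vless_of_ltAtLastDiff hxy' hyx' (s := s) (t := t) ?_ ?_
    · rw [iterate_vstar_append_singleton_of_le hx, iterate_vstar_append_singleton_of_le hy, heq]
    · rw [iterate_vstar_append_singleton_of_le hx.le, iterate_vstar_append_singleton_of_le hy.le,
        LtAtLastDiff.append_singleton_iff hlt.length_eq]
      exact Or.inr ⟨rfl, hlt⟩

lemma vless_append_singleton {x y : List α} (hne : x ≠ y) (h : VLess x y) (c : α) :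
    VLess (x ++ [c]) (y ++ [c]) := by
  rcases h with ⟨k, -, hk⟩ | ⟨hxy, hyx, s, t, heq, -, hlt⟩
  · exact vless_append_singleton_of_onStarPath hne ⟨k, hk⟩ c
  · exact vless_append_singleton_of_ltAtLastDiff hxy hyx heq hlt c

/-- Appending the same letter on the right preserves (and reflects) V-order:
for distinct strings `x`, `y`, `x ≺ y ⟺ xλ ≺ yλ`. -/
theorem vless_append_right_iff {α : Type*} [LinearOrder α]
    (x y : List α) (lam : α) (hxy : x ≠ y) :
    VLess x y ↔ VLess (x ++ [lam]) (y ++ [lam]) := by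
  refine ⟨fun h => vless_append_singleton hxy h lam, fun h => ?_⟩
  rcases vless_total hxy with hlt | hgt
  · exact hlt
  · have hne : y ++ [lam] ≠ x ++ [lam] := fun h' => hxy (List.append_cancel_right h').symm
    exact absurd h (vless_asymm hne (vless_append_singleton (Ne.symm hxy) hgt lam))
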